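/- arXiv:1310.6521 — 4 statements merged into one kernel-verified Lean document; each statement's English description precedes it below -/
import Mathlib

section
/- A 3-dimensional lattice polytope P ⊂ ℝ³ is normal if and only if (P ∩ ℤ³) + (P ∩ ℤ³) = (2P) ∩ ℤ³, i.e., surjectivity of the addition map at level 2 implies it at all levels n ≥ 2. -/
open scoped Pointwise

def IsLatticePt {d : ℕ} (x : Fin d → ℝ) : Prop := ∀ i, ∃ z : ℤ, x i = (z : ℝ)

def IsLatticePolytope {d : ℕ} (P : Set (Fin d → ℝ)) : Prop :=
  ∃ V : Finset (Fin d → ℝ), V.Nonempty ∧ (∀ v ∈ V, IsLatticePt v) ∧ P = convexHull ℝ ↑V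

def IsNormalPolytope {d : ℕ} (P : Set (Fin d → ℝ)) : Prop :=
  ∀ n : ℕ, 1 ≤ n → ∀ x ∈ (n : ℝ) • P, IsLatticePt x →
    ∃ f : Fin n → (Fin d → ℝ), (∀ i, f i ∈ P ∧ IsLatticePt (f i)) ∧ x = ∑ i, f i

def P1 : Set (Fin 3 → ℝ) := convexHull ℝ {![0,0,0], ![1,0,0], ![0,1,0], ![0,0,1]}

def dot2 (x y : Fin 2 → ℝ) : ℝ := ∑ i, x i * y i

def normalCone (P : Set (Fin 2 → ℝ)) (u : Fin 2 → ℝ) : Set (Fin 2 → ℝ) :=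
  {y | ∀ x ∈ P, dot2 x y ≤ dot2 u y}

/-- The normal fan of `A` refines the normal fan of `B`: every normal cone of `A`
is contained in some normal cone of `B`. -/
def FanRefines (A B : Set (Fin 2 → ℝ)) : Prop :=
  ∀ u ∈ A, ∃ v ∈ B, normalCone A u ⊆ normalCone B v

/-- At every vertex the primitive edge directions form a ℤ-basis of ℤ². -/
def IsSmoothPolygon (F : Set (Fin 2 → ℝ)) : Prop :=
  ∀ u ∈ Set.extremePoints ℝ F, ∃ m₁ m₂ : Fin 2 → ℤ,
    (m₁ 0 * m₂ 1 - m₁ 1 * m₂ 0 = 1 ∨ m₁ 0 * m₂ 1 - m₁ 1 * m₂ 0 = -1) ∧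
    {y : Fin 2 → ℝ | ∃ t : ℝ, ∃ x ∈ F, 0 ≤ t ∧ y = t • (x - u)} =
      {y : Fin 2 → ℝ | ∃ a b : ℝ, 0 ≤ a ∧ 0 ≤ b ∧
        y = a • (fun i => (m₁ i : ℝ)) + b • (fun i => (m₂ i : ℝ))}

def emb (v : Fin 2 → ℝ) (t : ℝ) : Fin 3 → ℝ := ![v 0, v 1, t]

def cayley (F G : Set (Fin 2 → ℝ)) : Set (Fin 3 → ℝ) :=
  convexHull ℝ ((fun v => emb v 0) '' F ∪ (fun v => emb v 1) '' G)

lemma latt_sub {d : ℕ} {x y : Fin d → ℝ} (hx : IsLatticePt x) (hy : IsLatticePt y) :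
    IsLatticePt (x - y) := by
  intro i
  obtain ⟨a, ha⟩ := hx i; obtain ⟨b, hb⟩ := hy i
  exact ⟨a - b, by simp [ha, hb]⟩

lemma latt_sum {d : ℕ} {ι : Type*} [Fintype ι] {v : ι → Fin d → ℝ}
    (h : ∀ i, IsLatticePt (v i)) : IsLatticePt (∑ i, v i) := by
  intro k
  refine ⟨∑ i, (h i k).choose, ?_⟩
  rw [Finset.sum_apply]
  push_cast
  exact Finset.sum_congr rfl fun i _ => (h i k).choose_spec

lemma mem_smul_set_iff {c : ℝ} (hc : 0 < c) {P : Set (Fin 3 → ℝ)} {x : Fin 3 → ℝ} :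
    x ∈ c • P ↔ c⁻¹ • x ∈ P := Set.mem_smul_set_iff_inv_smul_mem₀ hc.ne' _ _

lemma comb_mem_smul {P : Set (Fin 3 → ℝ)} (hP : Convex ℝ P) {ι : Type*} [Fintype ι]
    (g : ι → Fin 3 → ℝ) (w : ι → ℝ) (c : ℝ) (hc : 0 < c)
    (hg : ∀ i, g i ∈ P) (hw : ∀ i, 0 ≤ w i) (hsum : ∑ i, w i = c) :
    (∑ i, w i • g i) ∈ c • P := by
  rw [mem_smul_set_iff hc]
  rw [Finset.smul_sum]
  have : ∀ i : ι, c⁻¹ • w i • g i = (c⁻¹ * w i) • g i := fun i => smul_smul _ _ _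
  simp_rw [this]
  refine hP.sum_mem (fun i _ => mul_nonneg (inv_nonneg.2 hc.le) (hw i)) ?_ (fun i _ => hg i)
  rw [← Finset.mul_sum, hsum, inv_mul_cancel₀ hc.ne']

noncomputable def Mv (v : Fin 4 → Fin 3 → ℝ) : Matrix (Fin 4) (Fin 4) ℝ :=
  Matrix.of (fun i => Fin.cons 1 (v i))

lemma det_ne_zero_of_ai {v : Fin 4 → Fin 3 → ℝ} (h : AffineIndependent ℝ v) :
    (Mv v).det ≠ 0 := by
  intro hdet
  obtain ⟨c, hc0, hc⟩ := Matrix.exists_vecMul_eq_zero_iff.2 hdet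
  have hsum : ∑ i, c i = 0 := by
    have := congrFun hc 0
    simpa [Matrix.vecMul, dotProduct, Mv] using this
  have hcomb : ∑ i, c i • v i = 0 := by
    funext k
    have := congrFun hc (Fin.succ k)
    simpa [Matrix.vecMul, dotProduct, Mv, Finset.sum_apply] using this
  have := affineIndependent_iff.1 h Finset.univ c (by simpa using hsum) (by simpa using hcomb)
  exact hc0 (funext fun i => this i (Finset.mem_univ i))

lemma det_int {v : Fin 4 → Fin 3 → ℝ} (h : ∀ i, IsLatticePt (v i)) :
    ∃ k : ℤ, (Mv v).det = (k : ℝ) := by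
  classical
  set N : Matrix (Fin 4) (Fin 4) ℤ :=
    Matrix.of (fun i => Fin.cons 1 (fun t => (h i t).choose)) with hN
  refine ⟨N.det, ?_⟩
  have : Mv v = N.map (Int.cast : ℤ → ℝ) := by
    ext i j
    refine Fin.cases ?_ (fun t => ?_) j
    · simp only [Mv, hN, Matrix.map_apply, Matrix.of_apply, Fin.cons_zero, Int.cast_one]
    · simp only [Mv, hN, Matrix.map_apply, Matrix.of_apply, Fin.cons_succ]
      exact (h i t).choose_spec
  rw [this]
  exact (RingHom.map_det (Int.castRingHom ℝ) N).symm

/-- The "done" branch: some barycentric coordinate is ≥ 1, subtract that vertex. -/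
lemma done_branch {P : Set (Fin 3 → ℝ)} (hP : Convex ℝ P) {z : Fin 3 → ℝ}
    {ι : Type*} [Fintype ι] [DecidableEq ι] {v : ι → Fin 3 → ℝ} {lam : ι → ℝ} {c : ℝ}
    (hvP : ∀ i, v i ∈ P) (hl0 : ∀ i, 0 ≤ lam i) (hsum : ∑ i, lam i = c)
    (hzrep : z = ∑ i, lam i • v i) {i : ι} (hi : 1 ≤ lam i) (hc : 1 < c) :
    z - v i ∈ (c - 1) • P := by
  have hrep : z - v i = ∑ l, (lam l - if l = i then 1 else 0) • v l := by
    rw [hzrep]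
    simp only [sub_smul, ite_smul, one_smul, zero_smul, Finset.sum_sub_distrib]
    rw [Finset.sum_ite_eq' Finset.univ i v]
    simp
  rw [hrep]
  refine comb_mem_smul hP _ _ _ (by linarith) hvP ?_ ?_
  · intro l
    by_cases h : l = i
    · subst h; simp; linarith
    · simp [h, hl0 l]
  · simp [Finset.sum_sub_distrib, hsum]

lemma core {P : Set (Fin 3 → ℝ)} (hP : Convex ℝ P) {z : Fin 3 → ℝ} (hz : IsLatticePt z) :
    ∀ D : ℕ, ∀ v : Fin 4 → Fin 3 → ℝ, ∀ lam : Fin 4 → ℝ,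
    (∀ i, v i ∈ P) → (∀ i, IsLatticePt (v i)) → (∀ i, 0 ≤ lam i) → (∑ i, lam i = 3) →
    (z = ∑ i, lam i • v i) →
    (∃ k : ℤ, (Mv v).det = (k : ℝ) ∧ k ≠ 0 ∧ k.natAbs ≤ D) →
    ∃ x, x ∈ P ∧ IsLatticePt x ∧ z - x ∈ (2 : ℝ) • P := by
  intro D
  induction D with
  | zero =>
    rintro v lam _ _ _ _ _ ⟨k, -, hk0, hkD⟩
    exact absurd (Int.natAbs_eq_zero.1 (Nat.le_zero.1 hkD)) hk0
  | succ D ih =>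
    rintro v lam hvP hvlat hl0 hsum hzrep ⟨k, hdet, hk0, hkD⟩
    by_cases hbig : ∃ i, 1 ≤ lam i
    · obtain ⟨i, hi⟩ := hbig
      refine ⟨v i, hvP i, hvlat i, ?_⟩
      have := done_branch hP hvP hl0 hsum hzrep hi (by norm_num : (1:ℝ) < 3)
      norm_num at this
      exact this
    · push_neg at hbig
      -- all lam i < 1, hence all lam i > 0
      have hlpos : ∀ i, 0 < lam i := by
        intro j
        rcases (hl0 j).lt_or_eq with h | h
        · exact h
        · exfalso
          have h3 : ∑ l ∈ Finset.univ.erase j, lam l < ∑ l ∈ Finset.univ.erase j, (1:ℝ) := by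
            refine Finset.sum_lt_sum_of_nonempty ?_ (fun l _ => hbig l)
            rw [← Finset.card_pos, Finset.card_erase_of_mem (Finset.mem_univ j)]
            simp
          have hcard : ∑ l ∈ Finset.univ.erase j, (1:ℝ) = 3 := by
            rw [Finset.sum_const, Finset.card_erase_of_mem (Finset.mem_univ j)]
            simp
          have h4 : lam j + ∑ l ∈ Finset.univ.erase j, lam l = 3 := by
            rw [Finset.add_sum_erase _ _ (Finset.mem_univ j), hsum]
          rw [hcard] at h3
          linarith
      set mu : Fin 4 → ℝ := fun i => 1 - lam i with hmu
      have hmupos : ∀ i, 0 < mu i := fun i => by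
        have := hbig i; simp only [hmu]; linarith
      have hmusum : ∑ i, mu i = 1 := by
        simp only [hmu, Finset.sum_sub_distrib, hsum]
        norm_num
      set zbar : Fin 3 → ℝ := (∑ i, v i) - z with hzbar
      have hzbar_rep : zbar = ∑ i, mu i • v i := by
        rw [hzbar, hzrep, ← Finset.sum_sub_distrib]
        exact Finset.sum_congr rfl fun i _ => by rw [hmu]; rw [sub_smul, one_smul]
      have hzbarP : zbar ∈ P := by
        rw [hzbar_rep]
        exact hP.sum_mem (fun i _ => (hmupos i).le) hmusum (fun i _ => hvP i)
      have hzbarlat : IsLatticePt zbar := latt_sub (latt_sum hvlat) hz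
      obtain ⟨j, -, hj⟩ :=
        Finset.exists_min_image Finset.univ (fun i => lam i / mu i) ⟨0, Finset.mem_univ 0⟩
      set r := lam j / mu j with hr
      have hrpos : 0 < r := div_pos (hlpos j) (hmupos j)
      have hrmu : ∀ i, r * mu i ≤ lam i := fun i =>
        (le_div_iff₀ (hmupos i)).1 (hj i (Finset.mem_univ i))
      have hrmuj : r * mu j = lam j := by
        rw [hr, div_mul_cancel₀ _ (hmupos j).ne']
      by_cases hr1 : 1 ≤ r
      · refine ⟨zbar, hzbarP, hzbarlat, ?_⟩
        have hrep2 : z - zbar = ∑ i, (lam i - mu i) • v i := by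
          rw [hzrep, hzbar_rep, ← Finset.sum_sub_distrib]
          exact Finset.sum_congr rfl fun i _ => (sub_smul _ _ _).symm
        rw [hrep2]
        refine comb_mem_smul hP _ _ _ two_pos hvP (fun i => ?_) ?_
        · have h1 : mu i ≤ r * mu i := le_mul_of_one_le_left (hmupos i).le hr1
          have := hrmu i
          linarith
        · rw [Finset.sum_sub_distrib, hsum, hmusum]; norm_num
      · push_neg at hr1
        classical
        set v' := Function.update v j zbar with hv'
        set lam' : Fin 4 → ℝ := fun i => if i = j then r else lam i - r * mu i with hlam'
        have hv'P : ∀ i, v' i ∈ P := fun i => by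
          rw [hv', Function.update_apply]
          split
          · exact hzbarP
          · exact hvP i
        have hv'lat : ∀ i, IsLatticePt (v' i) := fun i => by
          rw [hv', Function.update_apply]
          split
          · exact hzbarlat
          · exact hvlat i
        have hl'0 : ∀ i, 0 ≤ lam' i := fun i => by
          rcases eq_or_ne i j with rfl | h
          · simpa [hlam'] using hrpos.le
          · simp only [hlam', if_neg h]
            linarith [hrmu i]
        have hES : ∑ l ∈ Finset.univ.erase j, lam l = 3 - lam j := by
          have := Finset.add_sum_erase Finset.univ lam (Finset.mem_univ j)
          rw [hsum] at this; linarith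
        have hEM : ∑ l ∈ Finset.univ.erase j, mu l = 1 - mu j := by
          have := Finset.add_sum_erase Finset.univ mu (Finset.mem_univ j)
          rw [hmusum] at this; linarith
        have hlam'e : ∀ l ∈ Finset.univ.erase j, lam' l = lam l - r * mu l := fun l hl => by
          rw [hlam']; exact if_neg (Finset.mem_erase.1 hl).1
        have hlam'j : lam' j = r := by rw [hlam']; exact if_pos rfl
        have hsum' : ∑ i, lam' i = 3 := by
          rw [← Finset.add_sum_erase _ _ (Finset.mem_univ j), hlam'j,
            Finset.sum_congr rfl hlam'e, Finset.sum_sub_distrib, hES, ← Finset.mul_sum, hEM]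
          nlinarith [hrmuj]
        have hzrep' : z = ∑ i, lam' i • v' i := by
          have e1 : ∑ i, lam' i • v' i
              = r • zbar + ∑ l ∈ Finset.univ.erase j, (lam l - r * mu l) • v l := by
            rw [← Finset.add_sum_erase _ _ (Finset.mem_univ j), hlam'j,
              show v' j = zbar from Function.update_self _ _ _]
            congr 1
            refine Finset.sum_congr rfl fun l hl => ?_
            rw [hlam'e l hl, hv', Function.update_of_ne (Finset.mem_erase.1 hl).1]
          have e2 : r • zbar = ∑ i, (r * mu i) • v i := by
            rw [hzbar_rep, Finset.smul_sum]
            exact Finset.sum_congr rfl fun i _ => smul_smul _ _ _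
          rw [e1, e2, ← Finset.add_sum_erase _ (fun i => (r * mu i) • v i) (Finset.mem_univ j),
            hrmuj]
          have e3 : ∑ l ∈ Finset.univ.erase j, (lam l - r * mu l) • v l
              = ∑ l ∈ Finset.univ.erase j, lam l • v l
                - ∑ l ∈ Finset.univ.erase j, (r * mu l) • v l := by
            rw [← Finset.sum_sub_distrib]
            exact Finset.sum_congr rfl fun l _ => sub_smul _ _ _
          rw [e3, hzrep, ← Finset.add_sum_erase _ (fun i => lam i • v i) (Finset.mem_univ j)]
          abel
        obtain ⟨k', hk'⟩ := det_int hv'lat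
        have hrowsum : (∑ i, mu i • (Mv v i)) = Fin.cons 1 zbar := by
          funext t
          rw [Finset.sum_apply]
          refine Fin.cases ?_ (fun s => ?_) t
          · simp only [Pi.smul_apply, Mv, Matrix.of_apply, Fin.cons_zero, smul_eq_mul, mul_one]
            simpa using hmusum
          · simp only [Pi.smul_apply, Mv, Matrix.of_apply, Fin.cons_succ, smul_eq_mul]
            have hcs := congrFun hzbar_rep s
            rw [Finset.sum_apply] at hcs
            simp only [Pi.smul_apply, smul_eq_mul] at hcs
            exact hcs.symm
        have hMv' : Mv v' = (Mv v).updateRow j (∑ i, mu i • (Mv v i)) := by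
          rw [hrowsum]
          funext i
          by_cases hij : i = j
          · subst hij
            rw [Matrix.updateRow_self]
            show (Fin.cons (1:ℝ) (v' i) : Fin 4 → ℝ) = Fin.cons (1:ℝ) zbar
            rw [hv', Function.update_self]
          · rw [Matrix.updateRow_ne hij]
            show (Fin.cons (1:ℝ) (v' i) : Fin 4 → ℝ) = Fin.cons (1:ℝ) (v i)
            rw [hv', Function.update_of_ne hij]
        have hdet' : (Mv v').det = mu j * (Mv v).det := by
          rw [hMv', Matrix.det_updateRow_sum]
          rfl
        have hcast : (k' : ℝ) = mu j * (k : ℝ) := by rw [← hk', hdet', hdet]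
        have hkR : ((k : ℝ)) ≠ 0 := Int.cast_ne_zero.2 hk0
        have hk'0 : k' ≠ 0 := by
          rw [← Int.cast_ne_zero (α := ℝ), hcast]
          exact mul_ne_zero (hmupos j).ne' hkR
        have hmuj1 : mu j < 1 := by
          have := hlpos j; simp only [hmu]; linarith
        have hlt : k'.natAbs < k.natAbs := by
          have habs : |(k' : ℝ)| < |(k : ℝ)| := by
            rw [hcast, abs_mul, abs_of_pos (hmupos j)]
            have : |(k:ℝ)| > 0 := abs_pos.2 hkR
            nlinarith
          have h2 : |k'| < |k| := by exact_mod_cast habs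
          rw [Int.abs_eq_natAbs, Int.abs_eq_natAbs] at h2
          exact_mod_cast h2
        exact ih v' lam' hv'P hv'lat hl'0 hsum' hzrep' ⟨k', hk', hk'0, by omega⟩

lemma split {V : Finset (Fin 3 → ℝ)} (hVlat : ∀ v ∈ V, IsLatticePt v) {z : Fin 3 → ℝ}
    (hz : IsLatticePt z) (n : ℕ) (hn : 3 ≤ n)
    (hmem : z ∈ (n : ℝ) • (convexHull ℝ (V : Set (Fin 3 → ℝ)))) :
    ∃ x, x ∈ convexHull ℝ (V : Set (Fin 3 → ℝ)) ∧ IsLatticePt x ∧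
      z - x ∈ ((n : ℝ) - 1) • convexHull ℝ (V : Set (Fin 3 → ℝ)) := by
  classical
  set P := convexHull ℝ (V : Set (Fin 3 → ℝ)) with hPdef
  have hP : Convex ℝ P := convex_convexHull _ _
  have hnpos : (0:ℝ) < n := by
    have : (3:ℝ) ≤ n := by exact_mod_cast hn
    linarith
  rw [mem_smul_set_iff hnpos] at hmem
  obtain ⟨ι, hfin, zf, w, hrange, hai, hwpos, hwsum, hcomb⟩ :=
    eq_pos_convex_span_of_mem_convexHull hmem
  set lam : ι → ℝ := fun i => (n:ℝ) * w i with hlam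
  have hzrep : z = ∑ i, lam i • zf i := by
    calc z = (n:ℝ) • ((n:ℝ)⁻¹ • z) := by rw [smul_smul, mul_inv_cancel₀ hnpos.ne', one_smul]
    _ = (n:ℝ) • ∑ i, w i • zf i := by rw [hcomb]
    _ = ∑ i, lam i • zf i := by
        rw [Finset.smul_sum]
        exact Finset.sum_congr rfl fun i _ => smul_smul _ _ _
  have hzfP : ∀ i, zf i ∈ P := fun i =>
    subset_convexHull ℝ _ (hrange (Set.mem_range_self i))
  have hzflat : ∀ i, IsLatticePt (zf i) := fun i => hVlat _ (hrange (Set.mem_range_self i))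
  have hl0 : ∀ i, 0 ≤ lam i := fun i => mul_nonneg hnpos.le (hwpos i).le
  have hsum : ∑ i, lam i = (n:ℝ) := by
    rw [hlam, ← Finset.mul_sum, hwsum, mul_one]
  by_cases hbig : ∃ i, 1 ≤ lam i
  · obtain ⟨i, hi⟩ := hbig
    refine ⟨zf i, hzfP i, hzflat i, ?_⟩
    have h1n : (1:ℝ) < n := by
      have : (3:ℝ) ≤ (n:ℝ) := by exact_mod_cast hn
      linarith
    exact done_branch hP hzfP hl0 hsum hzrep hi h1n
  · push_neg at hbig
    have hcard4 : Fintype.card ι ≤ 4 := by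
      have h1 := hai.card_le_finrank_succ
      have h2 : Module.finrank ℝ (vectorSpan ℝ (Set.range zf)) ≤ 3 := by
        have := Submodule.finrank_le (vectorSpan ℝ (Set.range zf))
        simpa [Module.finrank_fin_fun] using this
      omega
    have hne : (Finset.univ : Finset ι).Nonempty := by
      rcases (Finset.univ : Finset ι).eq_empty_or_nonempty with h | h
      · exfalso; rw [h] at hwsum; simp at hwsum
      · exact h
    have hltcard : (n:ℝ) < Fintype.card ι := by
      have h3 := Finset.sum_lt_sum_of_nonempty hne (fun i _ => hbig i)
      rw [hsum] at h3
      simpa [Finset.sum_const, Finset.card_univ] using h3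
    have hn3 : n = 3 := by
      have : (n:ℝ) < 4 := lt_of_lt_of_le hltcard (by exact_mod_cast hcard4)
      have h4 : n < 4 := by exact_mod_cast this
      omega
    have hcard : Fintype.card ι = 4 := by
      have : (3:ℝ) ≤ (n:ℝ) := by exact_mod_cast hn
      have h5 : 3 < Fintype.card ι := by
        have := lt_of_le_of_lt this hltcard
        exact_mod_cast this
      omega
    obtain e := (Fintype.equivFinOfCardEq hcard).symm
    set v : Fin 4 → Fin 3 → ℝ := zf ∘ e with hv
    set lam4 : Fin 4 → ℝ := lam ∘ e with hlam4
    have hai4 : AffineIndependent ℝ v := hai.comp_embedding e.toEmbedding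
    have hsum4 : ∑ i, lam4 i = 3 := by
      rw [hlam4]
      simp only [Function.comp]
      rw [Equiv.sum_comp e lam, hsum, hn3]
      norm_num
    have hzrep4 : z = ∑ i, lam4 i • v i := by
      rw [hzrep, ← Equiv.sum_comp e (fun i => lam i • zf i)]
      rfl
    obtain ⟨k, hk⟩ := det_int (v := v) (fun i => hzflat (e i))
    have hk0 : k ≠ 0 := by
      intro h
      apply det_ne_zero_of_ai hai4
      rw [hk, h, Int.cast_zero]
    obtain ⟨x, hxP, hxlat, hx2⟩ :=
      core hP hz k.natAbs v lam4 (fun i => hzfP (e i)) (fun i => hzflat (e i))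
        (fun i => hl0 (e i)) hsum4 hzrep4 ⟨k, hk, hk0, le_refl _⟩
    refine ⟨x, hxP, hxlat, ?_⟩
    rw [hn3]
    norm_num
    exact hx2

lemma normal_aux {V : Finset (Fin 3 → ℝ)} (hVlat : ∀ v ∈ V, IsLatticePt v)
    (h2 : ∀ x ∈ (2 : ℝ) • convexHull ℝ (V : Set (Fin 3 → ℝ)), IsLatticePt x →
      ∃ a b : Fin 3 → ℝ, a ∈ convexHull ℝ (V : Set (Fin 3 → ℝ)) ∧ IsLatticePt a ∧
        b ∈ convexHull ℝ (V : Set (Fin 3 → ℝ)) ∧ IsLatticePt b ∧ x = a + b) :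
    IsNormalPolytope (convexHull ℝ (V : Set (Fin 3 → ℝ))) := by
  set P := convexHull ℝ (V : Set (Fin 3 → ℝ)) with hPdef
  intro n
  induction n using Nat.strong_induction_on with
  | _ n ih =>
    intro hn x hx hlx
    match n, hn, ih with
    | 1, _, _ =>
      rw [Nat.cast_one, one_smul] at hx
      exact ⟨fun _ => x, fun i => ⟨hx, hlx⟩, by simp⟩
    | 2, _, _ =>
      have hx2 : x ∈ (2 : ℝ) • P := by
        have : ((2:ℕ) : ℝ) = (2:ℝ) := by norm_num
        rwa [this] at hx
      obtain ⟨a, b, haP, halat, hbP, hblat, hab⟩ := h2 x hx2 hlx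
      refine ⟨![a, b], ?_, ?_⟩
      · intro i
        fin_cases i
        · exact ⟨haP, halat⟩
        · exact ⟨hbP, hblat⟩
      · rw [hab, Fin.sum_univ_two]
        simp
    | (m+3), _, ih =>
      have hx' : x ∈ ((m+3 : ℕ) : ℝ) • P := hx
      obtain ⟨x0, hx0P, hx0lat, hrest⟩ := split hVlat hlx (m+3) (by omega) hx'
      have hrest' : x - x0 ∈ ((m+2 : ℕ) : ℝ) • P := by
        have hcast : ((m+3 : ℕ) : ℝ) - 1 = ((m+2 : ℕ) : ℝ) := by push_cast; ring
        rwa [hcast] at hrest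
      obtain ⟨g, hg, hgsum⟩ := ih (m+2) (by omega) (by omega) (x - x0) hrest'
        (latt_sub hlx hx0lat)
      refine ⟨Fin.cons x0 g, ?_, ?_⟩
      · intro i
        refine Fin.cases ?_ (fun s => ?_) i
        · exact ⟨hx0P, hx0lat⟩
        · simpa using hg s
      · rw [Fin.sum_cons, ← hgsum]
        abel


/-- A 3-dimensional lattice polytope is normal iff lattice points add at level 2. -/
theorem stmt2 (P : Set (Fin 3 → ℝ)) (hP : IsLatticePolytope P)
    (hdim : (interior P).Nonempty) :
    IsNormalPolytope P ↔
      (∀ x ∈ (2 : ℝ) • P, IsLatticePt x →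
        ∃ a b : Fin 3 → ℝ, a ∈ P ∧ IsLatticePt a ∧ b ∈ P ∧ IsLatticePt b ∧ x = a + b) := by
  obtain ⟨V, hVne, hVlat, rfl⟩ := hP
  constructor
  · intro hnorm x hx hlx
    have hx2 : x ∈ ((2:ℕ) : ℝ) • convexHull ℝ (V : Set (Fin 3 → ℝ)) := by
      have : ((2:ℕ) : ℝ) = (2:ℝ) := by norm_num
      rwa [this]
    obtain ⟨f, hf, hsum⟩ := hnorm 2 (by norm_num) x hx2 hlx
    exact ⟨f 0, f 1, (hf 0).1, (hf 0).2, (hf 1).1, (hf 1).2, by rw [hsum, Fin.sum_univ_two]⟩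
  · intro h2
    exact normal_aux hVlat h2
end

section
/- Slicing criterion for normality: let P ⊂ ℝ³ be a lattice polytope contained in the slab 0 ≤ z ≤ N, and for each integer i with 0 ≤ i ≤ N let Gᵢ = P ∩ {z = i}. Suppose each Gᵢ is a lattice polytope (all vertices in ℤ³) and each slab piece P(Gᵢ) = Conv{Gᵢ, Gᵢ₊₁} is normal and satisfies P ∩ {i ≤ z ≤ i+1} = P(Gᵢ). Then P is normal. -/
open scoped Pointwise

/-!
If `N > 0`, every point of `P` lies in one of the slab pieces, which are normal and contained
in `P`, so a lattice point `n • p` of `n • P` decomposes inside the piece containing `p`.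
If `N = 0`, `P` is a lattice polygon in the plane `z = 0`. By Carathéodory it is covered by lattice
segments and triangles, which are normal: subtracting vertices reduces to lattice points of
`m • Δ` all of whose barycentric weights are below `1`. For a segment there are none with
`m ≥ 2`; for a triangle `abc` this forces `m = 2`, and then `p = a + b + c - x` is a lattice
point of `abc` such that `x` lies in twice one of `pbc`, `pca`, `pab`, a lattice triangle of
smaller area. Induction on the area concludes.
-/

namespace IsLatticePt

variable {d : ℕ} {x y : Fin d → ℝ}

lemma add (hx : IsLatticePt x) (hy : IsLatticePt y) : IsLatticePt (x + y) := fun i => by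
  obtain ⟨m, hm⟩ := hx i
  obtain ⟨n, hn⟩ := hy i
  exact ⟨m + n, by simp [hm, hn]⟩

lemma sub (hx : IsLatticePt x) (hy : IsLatticePt y) : IsLatticePt (x - y) := fun i => by
  obtain ⟨m, hm⟩ := hx i
  obtain ⟨n, hn⟩ := hy i
  exact ⟨m - n, by simp [hm, hn]⟩

end IsLatticePt

def IsLatticeSum {d : ℕ} (Q : Set (Fin d → ℝ)) (n : ℕ) (x : Fin d → ℝ) : Prop :=
  ∃ f : Fin n → (Fin d → ℝ), (∀ i, f i ∈ Q ∧ IsLatticePt (f i)) ∧ x = ∑ i, f i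

section LatticeSum

variable {d : ℕ} {Q Q' : Set (Fin d → ℝ)} {n : ℕ} {x y : Fin d → ℝ}

lemma IsLatticeSum.mono (h : IsLatticeSum Q n x) (hQ : Q ⊆ Q') : IsLatticeSum Q' n x := by
  obtain ⟨f, hf, rfl⟩ := h
  exact ⟨f, fun i => ⟨hQ (hf i).1, (hf i).2⟩, rfl⟩

lemma isLatticeSum_zero : IsLatticeSum Q 0 0 :=
  ⟨Fin.elim0, fun i => i.elim0, by simp⟩

lemma IsLatticeSum.add_left (h : IsLatticeSum Q n x) (hy : y ∈ Q) (hyl : IsLatticePt y) :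
    IsLatticeSum Q (n + 1) (y + x) := by
  obtain ⟨f, hf, rfl⟩ := h
  exact ⟨Fin.cons y f, Fin.cases ⟨hy, hyl⟩ hf, by rw [Fin.sum_cons]⟩

lemma isLatticeSum_one (hx : x ∈ Q) (hxl : IsLatticePt x) : IsLatticeSum Q 1 x := by
  simpa using isLatticeSum_zero.add_left hx hxl

lemma IsNormalPolytope.of_forall_mem
    (hcover : ∀ p ∈ Q, ∃ Q' ⊆ Q, IsNormalPolytope Q' ∧ p ∈ Q') : IsNormalPolytope Q := by
  intro n hn x hx hxl
  obtain ⟨p, hp, rfl⟩ := Set.mem_smul_set.mp hx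
  obtain ⟨Q', hQ'Q, hQ', hpQ'⟩ := hcover p hp
  exact IsLatticeSum.mono (hQ' n hn _ (Set.smul_mem_smul_set hpQ') hxl) hQ'Q

end LatticeSum

section Peeling

variable {d : ℕ} {s : Finset (Fin d → ℝ)}

/-- What is left to check for the normality of `conv s` once vertices have been peeled off. -/
def CoreDecomposes (s : Finset (Fin d → ℝ)) : Prop :=
  ∀ m : ℕ, 2 ≤ m → ∀ w : (Fin d → ℝ) → ℝ, (∀ v ∈ s, 0 ≤ w v ∧ w v < 1) →
    ∑ v ∈ s, w v = m → IsLatticePt (∑ v ∈ s, w v • v) →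
    IsLatticeSum (convexHull ℝ ↑s) m (∑ v ∈ s, w v • v)

lemma isLatticeSum_of_weights (hs : ∀ v ∈ s, IsLatticePt v) (hcore : CoreDecomposes s)
    (n : ℕ) (w : (Fin d → ℝ) → ℝ) (hw : ∀ v ∈ s, 0 ≤ w v) (hwn : ∑ v ∈ s, w v = n)
    (hx : IsLatticePt (∑ v ∈ s, w v • v)) :
    IsLatticeSum (convexHull ℝ ↑s) n (∑ v ∈ s, w v • v) := by
  classical
  induction n generalizing w with
  | zero =>
    have hw0 : ∀ v ∈ s, w v = 0 := (Finset.sum_eq_zero_iff_of_nonneg hw).mp (by exact_mod_cast hwn)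
    rw [Finset.sum_eq_zero fun v hv => by rw [hw0 v hv, zero_smul]]
    exact isLatticeSum_zero
  | succ n ih =>
    by_cases hbig : ∃ v ∈ s, 1 ≤ w v
    · obtain ⟨v, hv, hv1⟩ := hbig
      let w' : (Fin d → ℝ) → ℝ := fun u => w u - if u = v then 1 else 0
      have hsum : ∑ u ∈ s, w u • u = v + ∑ u ∈ s, w' u • u := by
        simp [w', sub_smul, Finset.sum_sub_distrib, ite_smul, hv]
      rw [hsum] at hx ⊢
      have hlat : IsLatticePt (∑ u ∈ s, w' u • u) := by simpa using hx.sub (hs v hv)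
      refine (ih w' (fun u hu => ?_) ?_ hlat).add_left (subset_convexHull ℝ _ hv) (hs v hv)
      · by_cases huv : u = v
        · simp [w', huv, hv1]
        · simpa [w', huv] using hw u hu
      · simp [w', Finset.sum_sub_distrib, hwn, hv]
    · push Not at hbig
      rcases Nat.lt_or_ge n 1 with hn | hn
      · obtain rfl : n = 0 := by omega
        exact isLatticeSum_one
          (Finset.mem_convexHull'.mpr ⟨w, hw, by simpa using hwn, rfl⟩) hx
      · exact hcore (n + 1) (by omega) w (fun v hv => ⟨hw v hv, hbig v hv⟩) hwn hx

lemma isNormalPolytope_convexHull_of_core (hs : ∀ v ∈ s, IsLatticePt v)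
    (hcore : CoreDecomposes s) : IsNormalPolytope (convexHull ℝ (s : Set (Fin d → ℝ))) := by
  intro n hn x hx hxl
  obtain ⟨y, hy, rfl⟩ := Set.mem_smul_set.mp hx
  obtain ⟨w, hw0, hw1, rfl⟩ := Finset.mem_convexHull'.mp hy
  have hx : (n : ℝ) • ∑ v ∈ s, w v • v = ∑ v ∈ s, (n * w v) • v := by
    simp [Finset.smul_sum, smul_smul]
  rw [hx] at hxl ⊢
  exact isLatticeSum_of_weights hs hcore n _ (fun v hv => mul_nonneg n.cast_nonneg (hw0 v hv))
    (by rw [← Finset.mul_sum, hw1, mul_one]) hxl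

lemma coreDecomposes_of_card_le_two (hs : s.card ≤ 2) : CoreDecomposes s := by
  intro m hm w hw hwm _
  have hne : s.Nonempty := Finset.nonempty_of_sum_ne_zero (by rw [hwm]; positivity)
  have hlt : ∑ v ∈ s, w v < ∑ _v ∈ s, (1 : ℝ) :=
    Finset.sum_lt_sum_of_nonempty hne fun v hv => (hw v hv).2
  have hs' : (s.card : ℝ) ≤ 2 := by exact_mod_cast hs
  have hm' : (2 : ℝ) ≤ m := by exact_mod_cast hm
  simp only [Finset.sum_const, nsmul_eq_mul, mul_one] at hlt
  linarith

end Peeling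

section Triangle

variable {d : ℕ} {a b c : Fin d → ℝ}

lemma smul_add_smul_add_smul_mem_convexHull {α β γ : ℝ} (hα : 0 ≤ α) (hβ : 0 ≤ β)
    (hγ : 0 ≤ γ) (hsum : α + β + γ = 1) :
    α • a + β • b + γ • c ∈ convexHull ℝ {a, b, c} := by
  have := (convex_convexHull ℝ ({a, b, c} : Set (Fin d → ℝ))).sum_mem (t := Finset.univ)
    (w := ![α, β, γ]) (z := ![a, b, c])
    (fun i _ => by fin_cases i <;> assumption) (by simp [Fin.sum_univ_three, hsum])
    (fun i _ => by fin_cases i <;> exact subset_convexHull ℝ _ (by simp))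
  simpa [Fin.sum_univ_three] using this

/-- `p = a + b + c - x` has weights `1 - α, 1 - β, 1 - γ` in `abc`, and since `α` is the least
weight, `x` has the nonnegative weights `α, β - α, γ - α` (divided by `1 - α`) in `pbc`. -/
lemma isLatticeSum_two_of_subtriangle {α β γ : ℝ} (hαβ : α ≤ β) (hαγ : α ≤ γ) (hβ : β < 1)
    (hγ : γ < 1) (hsum : α + β + γ = 2) (hx : IsLatticePt (α • a + β • b + γ • c))
    (hsub : IsNormalPolytope (convexHull ℝ {a + b + c - (α • a + β • b + γ • c), b, c})) :
    IsLatticeSum (convexHull ℝ {a, b, c}) 2 (α • a + β • b + γ • c) := by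
  set x := α • a + β • b + γ • c with hx_def
  set p := a + b + c - x with hp_def
  have hα0 : 0 < α := by linarith
  have hα1 : 0 < 1 - α := by linarith
  have hpT : p ∈ convexHull ℝ {a, b, c} := by
    have hp : p = (1 - α) • a + (1 - β) • b + (1 - γ) • c := by rw [hp_def, hx_def]; module
    exact hp ▸ smul_add_smul_add_smul_mem_convexHull hα1.le (by linarith) (by linarith)
      (by linarith)
  have hxp : x = (2 : ℝ) • ((α / (2 * (1 - α))) • p + ((β - α) / (2 * (1 - α))) • b +
      ((γ - α) / (2 * (1 - α))) • c) := by
    have key : (1 - α) • x = α • p + (β - α) • b + (γ - α) • c := by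
      rw [hp_def, hx_def]; module
    apply smul_right_injective _ hα1.ne'
    dsimp only
    rw [key]
    match_scalars <;> field_simp
  have hx2 : x ∈ (2 : ℝ) • convexHull ℝ {p, b, c} := by
    rw [hxp]
    refine Set.smul_mem_smul_set (smul_add_smul_add_smul_mem_convexHull ?_ ?_ ?_ ?_)
    · positivity
    · exact div_nonneg (by linarith) (by positivity)
    · exact div_nonneg (by linarith) (by positivity)
    · field_simp; linarith
  refine IsLatticeSum.mono (hsub 2 one_le_two x (by exact_mod_cast hx2) hx) ?_
  refine convexHull_min ?_ (convex_convexHull ℝ _)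
  simp only [Set.insert_subset_iff, Set.singleton_subset_iff]
  exact ⟨hpT, subset_convexHull ℝ _ (by simp), subset_convexHull ℝ _ (by simp)⟩

lemma coreDecomposes_triple (hab : a ≠ b) (hac : a ≠ c) (hbc : b ≠ c)
    (h : ∀ {α β γ : ℝ}, α < 1 → β < 1 → γ < 1 → α + β + γ = 2 →
      IsLatticePt (α • a + β • b + γ • c) →
      IsLatticeSum (convexHull ℝ {a, b, c}) 2 (α • a + β • b + γ • c)) :
    CoreDecomposes {a, b, c} := by
  intro m hm w hw hwm hx
  have ha : a ∉ ({b, c} : Finset (Fin d → ℝ)) := by simp [hab, hac]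
  rw [Finset.sum_insert ha, Finset.sum_pair hbc, ← add_assoc] at hx hwm ⊢
  simp only [Finset.mem_insert, Finset.mem_singleton, forall_eq_or_imp, forall_eq] at hw
  obtain rfl : m = 2 := by
    have : (m : ℝ) < 3 := by linarith
    have : m < 3 := by exact_mod_cast this
    omega
  simpa using h hw.1.2 hw.2.1.2 hw.2.2.2 (by simpa using hwm) hx

end Triangle

section XYDet

variable {a b c : Fin 3 → ℝ}

/-- Twice the signed area of the projection of the triangle `abc` to the `xy`-plane. -/
def xyDet (a b c : Fin 3 → ℝ) : ℝ :=
  (b 0 - a 0) * (c 1 - a 1) - (b 1 - a 1) * (c 0 - a 0)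

lemma xyDet_rotate (a b c : Fin 3 → ℝ) : xyDet b c a = xyDet a b c := by
  unfold xyDet; ring

lemma xyDet_reflect_left (a b c : Fin 3 → ℝ) {α β γ : ℝ} (hsum : α + β + γ = 2) :
    xyDet (a + b + c - (α • a + β • b + γ • c)) b c = (1 - α) * xyDet a b c := by
  obtain rfl : γ = 2 - α - β := by linarith
  simp only [xyDet, Pi.add_apply, Pi.sub_apply, Pi.smul_apply, smul_eq_mul]
  ring

lemma IsLatticePt.exists_xyDet_eq_intCast (ha : IsLatticePt a) (hb : IsLatticePt b)
    (hc : IsLatticePt c) : ∃ z : ℤ, xyDet a b c = z := by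
  obtain ⟨a₀, ha₀⟩ := ha 0
  obtain ⟨a₁, ha₁⟩ := ha 1
  obtain ⟨b₀, hb₀⟩ := hb 0
  obtain ⟨b₁, hb₁⟩ := hb 1
  obtain ⟨c₀, hc₀⟩ := hc 0
  obtain ⟨c₁, hc₁⟩ := hc 1
  exact ⟨(b₀ - a₀) * (c₁ - a₁) - (b₁ - a₁) * (c₀ - a₀), by
    simp [xyDet, ha₀, ha₁, hb₀, hb₁, hc₀, hc₁]⟩

lemma abs_xyDet_le_of_lt_succ {D : ℕ} (ha : IsLatticePt a) (hb : IsLatticePt b)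
    (hc : IsLatticePt c) (h : |xyDet a b c| < D + 1) : |xyDet a b c| ≤ D := by
  obtain ⟨z, hz⟩ := ha.exists_xyDet_eq_intCast hb hc
  rw [hz, ← Int.cast_abs] at h ⊢
  have : |z| < D + 1 := by exact_mod_cast h
  exact_mod_cast (by omega : |z| ≤ D)

lemma ne_of_xyDet_ne_zero (h : xyDet a b c ≠ 0) : a ≠ b ∧ a ≠ c ∧ b ≠ c := by
  refine ⟨?_, ?_, ?_⟩ <;> rintro rfl <;> exact h (by unfold xyDet; ring)

end XYDet

section TriangleNormal

def TrianglesNormalUpTo (D : ℕ) : Prop :=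
  ∀ ⦃a b c : Fin 3 → ℝ⦄, IsLatticePt a → IsLatticePt b → IsLatticePt c →
    xyDet a b c ≠ 0 → |xyDet a b c| ≤ D → IsNormalPolytope (convexHull ℝ {a, b, c})

variable {D : ℕ} {a b c : Fin 3 → ℝ}

lemma TrianglesNormalUpTo.isLatticeSum_two (ih : TrianglesNormalUpTo D) (ha : IsLatticePt a)
    (hb : IsLatticePt b) (hc : IsLatticePt c) (h0 : xyDet a b c ≠ 0)
    (hD : |xyDet a b c| ≤ D + 1) {α β γ : ℝ} (hαβ : α ≤ β) (hαγ : α ≤ γ) (hβ : β < 1)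
    (hγ : γ < 1) (hsum : α + β + γ = 2) (hx : IsLatticePt (α • a + β • b + γ • c)) :
    IsLatticeSum (convexHull ℝ {a, b, c}) 2 (α • a + β • b + γ • c) := by
  refine isLatticeSum_two_of_subtriangle hαβ hαγ hβ hγ hsum hx ?_
  have hp : IsLatticePt (a + b + c - (α • a + β • b + γ • c)) := ((ha.add hb).add hc).sub hx
  have hdet := xyDet_reflect_left a b c hsum
  have hα : 0 < α ∧ α < 1 := ⟨by linarith, by linarith⟩
  refine ih hp hb hc (by rw [hdet]; exact mul_ne_zero (by linarith) h0) ?_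
  refine abs_xyDet_le_of_lt_succ hp hb hc ?_
  rw [hdet, abs_mul, abs_of_pos (by linarith : (0 : ℝ) < 1 - α)]
  have habs := abs_pos.mpr h0
  nlinarith

lemma TrianglesNormalUpTo.succ (ih : TrianglesNormalUpTo D) : TrianglesNormalUpTo (D + 1) := by
  intro a b c ha hb hc h0 hD
  push_cast at hD
  obtain ⟨hab, hac, hbc⟩ := ne_of_xyDet_ne_zero h0
  have hs : (({a, b, c} : Finset (Fin 3 → ℝ)) : Set (Fin 3 → ℝ)) = {a, b, c} := by simp
  rw [← hs]
  refine isNormalPolytope_convexHull_of_core (by simp [ha, hb, hc])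
    (coreDecomposes_triple hab hac hbc fun {α β γ} hα hβ hγ hsum hx => ?_)
  have hrot : ∀ u v t : Fin 3 → ℝ, ({v, t, u} : Set (Fin 3 → ℝ)) = {u, v, t} := by
    intro u v t; ext; simp only [Set.mem_insert_iff, Set.mem_singleton_iff]; tauto
  by_cases hmin_a : α ≤ β ∧ α ≤ γ
  · exact ih.isLatticeSum_two ha hb hc h0 hD hmin_a.1 hmin_a.2 hβ hγ hsum hx
  by_cases hmin_b : β ≤ γ ∧ β ≤ α
  · have := ih.isLatticeSum_two hb hc ha (by rwa [xyDet_rotate]) (by rwa [xyDet_rotate])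
      hmin_b.1 hmin_b.2 hγ hα (by linarith) (by convert hx using 1; abel)
    rwa [hrot a b c, show β • b + γ • c + α • a = α • a + β • b + γ • c by abel] at this
  · have hmin_c : γ ≤ α ∧ γ ≤ β := by grind
    have := ih.isLatticeSum_two hc ha hb (by rwa [← xyDet_rotate]) (by rwa [← xyDet_rotate])
      hmin_c.1 hmin_c.2 hα hβ (by linarith) (by convert hx using 1; abel)
    rwa [hrot b c a, hrot a b c, show γ • c + α • a + β • b = α • a + β • b + γ • c by abel] at this

lemma trianglesNormalUpTo (D : ℕ) : TrianglesNormalUpTo D := by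
  induction D with
  | zero => exact fun a b c _ _ _ h0 hD => absurd (abs_nonpos_iff.mp (by exact_mod_cast hD)) h0
  | succ D ih => exact ih.succ

lemma isNormalPolytope_triangle (ha : IsLatticePt a) (hb : IsLatticePt b) (hc : IsLatticePt c)
    (h0 : xyDet a b c ≠ 0) : IsNormalPolytope (convexHull ℝ {a, b, c}) :=
  trianglesNormalUpTo _ ha hb hc h0 (Nat.le_ceil _)

end TriangleNormal

lemma AffineIndependent.eq_zero_of_triple {d : ℕ} {a b c : Fin d → ℝ}
    (hT : AffineIndependent ℝ ((↑) : ({a, b, c} : Finset (Fin d → ℝ)) → Fin d → ℝ))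
    (hab : a ≠ b) (hac : a ≠ c) (hbc : b ≠ c) {α β γ : ℝ} (hsum : α + β + γ = 0)
    (hcomb : α • a + β • b + γ • c = 0) : α = 0 ∧ β = 0 ∧ γ = 0 := by
  classical
  let w : (Fin d → ℝ) → ℝ := fun y => if y = a then α else if y = b then β else γ
  have hne := And.intro hab.symm (And.intro hac.symm hbc.symm)
  have hw := hT.eq_zero_of_sum_eq_zero_subtype (w := w)
    (by simp [w, Finset.sum_insert, hab, hac, hbc, hne, ← add_assoc, hsum])
    (by simp [w, Finset.sum_insert, hab, hac, hbc, hne, ← add_assoc, hcomb])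
  refine ⟨by simpa [w] using hw a (by simp), by simpa [w, hab.symm] using hw b (by simp),
    by simpa [w, hac.symm, hbc.symm] using hw c (by simp)⟩

section Plane

variable {h : ℝ}

lemma Finset.card_le_three_of_affineIndependent {T : Finset (Fin 3 → ℝ)}
    (hT : AffineIndependent ℝ ((↑) : T → Fin 3 → ℝ)) (hplane : ∀ v ∈ T, v 2 = h) :
    T.card ≤ 3 := by
  have hspan : vectorSpan ℝ (Set.range ((↑) : T → Fin 3 → ℝ)) ≤
      LinearMap.ker (LinearMap.proj (R := ℝ) (φ := fun _ : Fin 3 => ℝ) 2) := by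
    rw [vectorSpan_def, Submodule.span_le]
    rintro _ ⟨_, ⟨x, rfl⟩, _, ⟨y, rfl⟩, rfl⟩
    simp [hplane _ x.2, hplane _ y.2]
  have hne : vectorSpan ℝ (Set.range ((↑) : T → Fin 3 → ℝ)) ≠ ⊤ := fun htop => by
    have : (Pi.single 2 1 : Fin 3 → ℝ) ∈ vectorSpan ℝ (Set.range ((↑) : T → Fin 3 → ℝ)) :=
      htop ▸ Submodule.mem_top
    simpa using hspan this
  have hlt := Submodule.finrank_lt hne
  have hcard := hT.card_le_finrank_succ
  simp only [Module.finrank_fin_fun, Fintype.card_coe] at hlt hcard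
  omega

lemma xyDet_ne_zero_of_affineIndependent {a b c : Fin 3 → ℝ}
    (hT : AffineIndependent ℝ ((↑) : ({a, b, c} : Finset (Fin 3 → ℝ)) → Fin 3 → ℝ))
    (hab : a ≠ b) (hac : a ≠ c) (hbc : b ≠ c) (ha : a 2 = h) (hb : b 2 = h) (hc : c 2 = h) :
    xyDet a b c ≠ 0 := by
  intro h0
  unfold xyDet at h0
  obtain ⟨-, h1b, h1c⟩ := hT.eq_zero_of_triple hab hac hbc
    (α := b 1 - c 1) (β := c 1 - a 1) (γ := a 1 - b 1) (by ring) (by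
      funext i; fin_cases i <;> simp [ha, hb, hc] <;> first | ring1 | linear_combination h0)
  obtain ⟨-, h2b, h2c⟩ := hT.eq_zero_of_triple hab hac hbc
    (α := b 0 - c 0) (β := c 0 - a 0) (γ := a 0 - b 0) (by ring) (by
      funext i; fin_cases i <;> simp [ha, hb, hc] <;> first | ring1 | linear_combination -h0)
  refine hab (funext fun i => ?_)
  fin_cases i <;> simp <;> linarith

lemma isNormalPolytope_of_subset_plane {P : Set (Fin 3 → ℝ)} (hP : IsLatticePolytope P)
    (hplane : P ⊆ {x | x 2 = h}) : IsNormalPolytope P := by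
  obtain ⟨V, -, hV, rfl⟩ := hP
  refine IsNormalPolytope.of_forall_mem fun p hp => ?_
  rw [convexHull_eq_union] at hp
  simp only [Set.mem_iUnion] at hp
  obtain ⟨T, hTV, hT, hpT⟩ := hp
  refine ⟨_, convexHull_mono hTV, ?_, hpT⟩
  have hTlat : ∀ v ∈ T, IsLatticePt v := fun v hv => hV v (hTV hv)
  have hTplane : ∀ v ∈ T, v 2 = h := fun v hv => hplane (subset_convexHull ℝ _ (hTV hv))
  rcases (T.card_le_three_of_affineIndependent hT hTplane).lt_or_eq with hcard | hcard
  · exact isNormalPolytope_convexHull_of_core hTlat (coreDecomposes_of_card_le_two (by omega))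
  · obtain ⟨a, b, c, hab, hac, hbc, rfl⟩ := Finset.card_eq_three.mp hcard
    have h0 := xyDet_ne_zero_of_affineIndependent hT hab hac hbc (hTplane a (by simp))
      (hTplane b (by simp)) (hTplane c (by simp))
    simpa using isNormalPolytope_triangle (hTlat a (by simp)) (hTlat b (by simp))
      (hTlat c (by simp)) h0

end Plane

lemma exists_nat_le_le_succ {t : ℝ} {N : ℕ} (hN : 0 < N) (ht : 0 ≤ t ∧ t ≤ N) :
    ∃ i : ℕ, i < N ∧ (i : ℝ) ≤ t ∧ t ≤ i + 1 := by
  rcases lt_or_ge t (N - 1 : ℕ) with hlt | hge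
  · refine ⟨⌊t⌋₊, ?_, Nat.floor_le ht.1, (Nat.lt_floor_add_one t).le⟩
    have := Nat.floor_lt ht.1 |>.mpr hlt
    omega
  · refine ⟨N - 1, by omega, hge, ?_⟩
    rw [Nat.cast_sub hN]
    push_cast
    linarith [ht.2]

theorem stmt5_general (P : Set (Fin 3 → ℝ)) (hP : IsLatticePolytope P) (N : ℕ)
    (hslab : P ⊆ {x | 0 ≤ x 2 ∧ x 2 ≤ (N : ℝ)})
    (hpiece : ∀ i : ℕ, i < N →
      IsNormalPolytope (convexHull ℝ ((P ∩ {x | x 2 = (i : ℝ)}) ∪ (P ∩ {x | x 2 = (i : ℝ) + 1}))) ∧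
      P ∩ {x | (i : ℝ) ≤ x 2 ∧ x 2 ≤ (i : ℝ) + 1} =
        convexHull ℝ ((P ∩ {x | x 2 = (i : ℝ)}) ∪ (P ∩ {x | x 2 = (i : ℝ) + 1}))) :
    IsNormalPolytope P := by
  rcases Nat.eq_zero_or_pos N with rfl | hN
  · exact isNormalPolytope_of_subset_plane hP fun x hx =>
      le_antisymm (by exact_mod_cast (hslab hx).2) (hslab hx).1
  · refine IsNormalPolytope.of_forall_mem fun p hp => ?_
    obtain ⟨i, hiN, hi⟩ := exists_nat_le_le_succ hN (hslab hp)
    obtain ⟨hnormal, hpiece_eq⟩ := hpiece i hiN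
    exact ⟨_, hpiece_eq ▸ Set.inter_subset_left, hnormal, hpiece_eq ▸ ⟨hp, hi⟩⟩

/-- Slicing criterion for normality. -/
theorem stmt5 (P : Set (Fin 3 → ℝ)) (hP : IsLatticePolytope P) (N : ℕ)
    (hslab : P ⊆ {x | 0 ≤ x 2 ∧ x 2 ≤ (N : ℝ)})
    (hslice : ∀ i : ℕ, i ≤ N → IsLatticePolytope (P ∩ {x | x 2 = (i : ℝ)}))
    (hpiece : ∀ i : ℕ, i < N →
      IsNormalPolytope (convexHull ℝ ((P ∩ {x | x 2 = (i : ℝ)}) ∪ (P ∩ {x | x 2 = (i : ℝ) + 1}))) ∧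
      P ∩ {x | (i : ℝ) ≤ x 2 ∧ x 2 ≤ (i : ℝ) + 1} =
        convexHull ℝ ((P ∩ {x | x 2 = (i : ℝ)}) ∪ (P ∩ {x | x 2 = (i : ℝ) + 1}))) :
    IsNormalPolytope P :=
  stmt5_general P hP N hslab hpiece
end

section
/- Normality of truncated dilated simplices: for integers 0 < m < n, the polytope P = nP₁ ∩ {z ≤ m} = Conv{(0,0,0),(n,0,0),(0,n,0),(0,0,m),(n−m,0,m),(0,n−m,m)} ⊂ ℝ³ is a normal lattice polytope. -/
open scoped Pointwise

/-!
The polytope is the H-polytope `{p ≥ 0, p 2 ≤ m, p 0 + p 1 + p 2 ≤ n}`: its slice at height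
`h = s * m` is the convex combination `(1 - s) • bottom + s • top` of two triangles with the same
barycentric coordinates. A lattice point `(a, b, c)` of the `(k + 1)`-fold dilate splits greedily
as a lattice point of `P` plus one of `k • P`: give the first summand height `min c m` and then as
much of `a` and `b` as the remaining budget `n - min c m` allows.
-/

def truncSimplex {R : Type*} [Add R] [Zero R] [LE R] (m n : R) : Set (Fin 3 → R) :=
  {p | 0 ≤ p 0 ∧ 0 ≤ p 1 ∧ 0 ≤ p 2 ∧ p 2 ≤ m ∧ p 0 + p 1 + p 2 ≤ n}

theorem add_smul_mem_convexHull_triple {𝕜 E : Type*} [Field 𝕜] [LinearOrder 𝕜]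
    [IsStrictOrderedRing 𝕜] [AddCommGroup E] [Module 𝕜 E] {a b c : E} {r₀ r₁ : 𝕜}
    (h₀ : 0 ≤ r₀) (h₁ : 0 ≤ r₁) (h : r₀ + r₁ ≤ 1) :
    (1 - r₀ - r₁) • a + r₀ • b + r₁ • c ∈ convexHull 𝕜 {a, b, c} := by
  have := (convex_convexHull 𝕜 {a, b, c}).sum_mem (t := Finset.univ) (w := ![1 - r₀ - r₁, r₀, r₁])
    (z := ![a, b, c]) (by intro i _; fin_cases i <;> simp <;> linarith)
    (by simp [Fin.sum_univ_succ])
    (by intro i _; fin_cases i <;> apply subset_convexHull <;> simp)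
  simpa [Fin.sum_univ_succ, add_assoc] using this

section Field

variable {𝕜 : Type*} [Field 𝕜] [LinearOrder 𝕜] [IsStrictOrderedRing 𝕜]

theorem convex_truncSimplex (m n : 𝕜) : Convex 𝕜 (truncSimplex m n) := by
  rintro p ⟨hp₀, hp₁, hp₂, hpm, hpn⟩ q ⟨hq₀, hq₁, hq₂, hqm, hqn⟩ a b ha hb hab
  refine ⟨?_, ?_, ?_, ?_, ?_⟩ <;> simp only [Pi.add_apply, Pi.smul_apply, smul_eq_mul] <;>
    nlinarith

theorem convexHull_subset_truncSimplex {m n : 𝕜} (hm : 0 ≤ m) (hmn : m ≤ n) :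
    convexHull 𝕜 {![0, 0, 0], ![n, 0, 0], ![0, n, 0], ![0, 0, m], ![n - m, 0, m],
      ![0, n - m, m]} ⊆ truncSimplex m n := by
  refine convexHull_min ?_ (convex_truncSimplex m n)
  simp only [Set.insert_subset_iff, Set.singleton_subset_iff]
  refine ⟨?_, ?_, ?_, ?_, ?_, ?_⟩ <;> refine ⟨?_, ?_, ?_, ?_, ?_⟩ <;> simp <;> linarith

theorem truncSimplex_subset_convexHull {m n : 𝕜} (hm : 0 < m) (hmn : m < n) :
    truncSimplex m n ⊆ convexHull 𝕜 {![0, 0, 0], ![n, 0, 0], ![0, n, 0], ![0, 0, m],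
      ![n - m, 0, m], ![0, n - m, m]} := by
  rintro p ⟨h₀, h₁, h₂, h₂m, hsum⟩
  have hr : 0 < n - p 2 := by linarith
  set s := p 2 / m
  set r₀ := p 0 / (n - p 2)
  set r₁ := p 1 / (n - p 2)
  have hr₀ : 0 ≤ r₀ := by positivity
  have hr₁ : 0 ≤ r₁ := by positivity
  have hr₀₁ : r₀ + r₁ ≤ 1 := by
    rw [← add_div, div_le_one hr]; linarith
  have hs : s ≤ 1 := div_le_one_of_le₀ h₂m hm.le
  have hbot := add_smul_mem_convexHull_triple (a := ![(0 : 𝕜), 0, 0]) (b := ![n, 0, 0])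
    (c := ![0, n, 0]) hr₀ hr₁ hr₀₁
  have htop := add_smul_mem_convexHull_triple (a := ![(0 : 𝕜), 0, m]) (b := ![n - m, 0, m])
    (c := ![0, n - m, m]) hr₀ hr₁ hr₀₁
  have hp : p = (1 - s) • ((1 - r₀ - r₁) • ![(0 : 𝕜), 0, 0] + r₀ • ![n, 0, 0] + r₁ • ![0, n, 0]) +
      s • ((1 - r₀ - r₁) • ![(0 : 𝕜), 0, m] + r₀ • ![n - m, 0, m] + r₁ • ![0, n - m, m]) := by
    ext j; fin_cases j <;> simp [s, r₀, r₁] <;> field_simp <;> ring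
  rw [hp]
  refine convex_convexHull 𝕜 _ (convexHull_mono ?_ hbot) (convexHull_mono ?_ htop)
    (by linarith) (by positivity) (by ring)
  all_goals simp [Set.insert_subset_iff]

theorem convexHull_eq_truncSimplex {m n : 𝕜} (hm : 0 < m) (hmn : m < n) :
    convexHull 𝕜 {![0, 0, 0], ![n, 0, 0], ![0, n, 0], ![0, 0, m], ![n - m, 0, m],
      ![0, n - m, m]} = truncSimplex m n :=
  (convexHull_subset_truncSimplex hm.le hmn.le).antisymm (truncSimplex_subset_convexHull hm hmn)

end Field

section OrderedRing

variable {R : Type*} [Ring R] [LinearOrder R] [IsStrictOrderedRing R]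

theorem smul_mem_truncSimplex {m n t : R} {p : Fin 3 → R} (ht : 0 ≤ t)
    (hp : p ∈ truncSimplex m n) : t • p ∈ truncSimplex (t * m) (t * n) := by
  obtain ⟨h₀, h₁, h₂, hm, hn⟩ := hp
  refine ⟨?_, ?_, ?_, ?_, ?_⟩ <;> simp only [Pi.smul_apply, smul_eq_mul, ← mul_add]
  · exact mul_nonneg ht h₀
  · exact mul_nonneg ht h₁
  · exact mul_nonneg ht h₂
  · exact mul_le_mul_of_nonneg_left hm ht
  · exact mul_le_mul_of_nonneg_left hn ht

theorem intCast_mem_truncSimplex_iff {m n : ℤ} {z : Fin 3 → ℤ} :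
    (fun i => (z i : R)) ∈ truncSimplex (m : R) (n : R) ↔ z ∈ truncSimplex m n := by
  simp only [truncSimplex, Set.mem_ofPred_eq]
  norm_cast

end OrderedRing

theorem IsLatticePt.exists_eq_intCast {d : ℕ} {x : Fin d → ℝ} (hx : IsLatticePt x) :
    ∃ z : Fin d → ℤ, x = fun i => (z i : ℝ) := by
  choose z hz using hx
  exact ⟨z, funext hz⟩

theorem truncSimplex_add_subset {m n M N : ℤ} (hm : 0 ≤ m) (hmn : m ≤ n) (hM : 0 ≤ M)
    (hMN : M ≤ N) : truncSimplex (m + M) (n + N) ⊆ truncSimplex m n + truncSimplex M N := by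
  rintro z ⟨h₀, h₁, h₂, h₂m, hsum⟩
  set u₂ := min (z 2) m
  set u₀ := min (z 0) (min (z 0 + z 1) (n - u₂))
  set u₁ := min (z 0 + z 1) (n - u₂) - u₀
  refine ⟨![u₀, u₁, u₂], ?_, z - ![u₀, u₁, u₂], ?_, add_sub_cancel _ _⟩ <;>
    refine ⟨?_, ?_, ?_, ?_, ?_⟩ <;> simp <;> omega

theorem exists_sum_eq_of_mem_truncSimplex {m n : ℤ} (hm : 0 ≤ m) (hmn : m ≤ n) :
    ∀ (k : ℕ) {z : Fin 3 → ℤ}, z ∈ truncSimplex (k * m) (k * n) →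
      ∃ f : Fin k → Fin 3 → ℤ, (∀ i, f i ∈ truncSimplex m n) ∧ ∑ i, f i = z
  | 0, z, ⟨h₀, h₁, h₂, _, hsum⟩ => ⟨Fin.elim0, nofun, by ext j; fin_cases j <;> simp <;> omega⟩
  | k + 1, z, hz => by
    have hkm : 0 ≤ (k : ℤ) * m := by positivity
    have hkmn : (k : ℤ) * m ≤ k * n := mul_le_mul_of_nonneg_left hmn (by positivity)
    push_cast [add_mul, one_mul, add_comm _ m, add_comm _ n] at hz
    obtain ⟨u, hu, v, hv, rfl⟩ := truncSimplex_add_subset hm hmn hkm hkmn hz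
    obtain ⟨f, hf, rfl⟩ := exists_sum_eq_of_mem_truncSimplex hm hmn k hv
    exact ⟨Fin.cons u f, Fin.cases hu hf, by simp [Fin.sum_univ_succ]⟩

/-- Truncated dilated simplices are normal. -/
theorem stmt7 (m n : ℕ) (hm : 0 < m) (hmn : m < n) :
    IsNormalPolytope (convexHull ℝ
      {![0,0,0], ![(n:ℝ),0,0], ![0,(n:ℝ),0], ![0,0,(m:ℝ)],
       ![(n:ℝ)-(m:ℝ),0,(m:ℝ)], ![0,(n:ℝ)-(m:ℝ),(m:ℝ)]} : Set (Fin 3 → ℝ)) := by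
  rw [convexHull_eq_truncSimplex (by exact_mod_cast hm) (by exact_mod_cast hmn)]
  rintro k - _ ⟨y, hy, rfl⟩ hlat
  obtain ⟨z, hz⟩ := hlat.exists_eq_intCast
  have hzk : z ∈ truncSimplex ((k : ℤ) * m) ((k : ℤ) * n) := by
    rw [← intCast_mem_truncSimplex_iff (R := ℝ), ← hz]
    push_cast
    exact smul_mem_truncSimplex k.cast_nonneg hy
  obtain ⟨f, hf, rfl⟩ := exists_sum_eq_of_mem_truncSimplex (Int.natCast_nonneg m)
    (by exact_mod_cast hmn.le) k hzk
  refine ⟨fun i j => (f i j : ℝ), fun i => ⟨?_, fun j => ⟨f i j, rfl⟩⟩, ?_⟩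
  · exact_mod_cast intCast_mem_truncSimplex_iff.2 (hf i)
  · rw [hz]; ext j; simp
end

section
/- The equality (P ∩ ℤ³) + ((n−1)P ∩ ℤ³) = (nP) ∩ ℤ³ holds for every lattice 3-polytope P and every n ≥ 4; more precisely, for a lattice polytope P of dimension d, (kP) ∩ ℤᵈ + (P ∩ ℤᵈ) = ((k+1)P) ∩ ℤᵈ for all k ≥ d − 1. -/
/-!
By Carathéodory, a lattice point `x ∈ (k+1)P` is `∑ μᵢ wᵢ` with affinely independent lattice
vertices `wᵢ` of `P` and weights `μᵢ ≥ 0` of total `k + 1`. If some `μⱼ ≥ 1`, then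
`x = (x - wⱼ) + wⱼ` with `x - wⱼ ∈ kP`. Otherwise, as `k + 1 ≥ d`, there are `d + 1` weights,
all in `(0, 1)`, and `k + 1 = d`; then `y = ∑ (1 - μᵢ) wᵢ = ∑ wᵢ - x` is a lattice point of `P`,
and exchanging a suitable `wⱼ` for `y` gives a new representation of `x` whose simplex has its
integral determinant multiplied by `1 - μⱼ ∈ (0, 1)`. This cannot go on forever.
-/
open scoped Pointwise

open Finset Function

section Lattice

variable {d : ℕ}

theorem IsLatticePt.add_s9 {x y : Fin d → ℝ} (hx : IsLatticePt x) (hy : IsLatticePt y) :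
    IsLatticePt (x + y) := by
  intro i
  obtain ⟨a, ha⟩ := hx i
  obtain ⟨b, hb⟩ := hy i
  exact ⟨a + b, by simp [ha, hb]⟩

theorem IsLatticePt.sub_s9 {x y : Fin d → ℝ} (hx : IsLatticePt x) (hy : IsLatticePt y) :
    IsLatticePt (x - y) := by
  intro i
  obtain ⟨a, ha⟩ := hx i
  obtain ⟨b, hb⟩ := hy i
  exact ⟨a - b, by simp [ha, hb]⟩

theorem isLatticePt_sum {ι : Type*} (s : Finset ι) {w : ι → Fin d → ℝ}
    (hw : ∀ i ∈ s, IsLatticePt (w i)) : IsLatticePt (∑ i ∈ s, w i) := by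
  classical
  induction s using Finset.induction_on with
  | empty => exact fun _ => ⟨0, by simp⟩
  | insert a s ha ih =>
    rw [sum_insert ha]
    exact (hw a (mem_insert_self a s)).add_s9 (ih fun i hi => hw i (mem_insert_of_mem hi))

def latticePoints (S : Set (Fin d → ℝ)) : Set (Fin d → ℝ) := {x | x ∈ S ∧ IsLatticePt x}

end Lattice

theorem Convex.sum_smul_mem_smul {E ι : Type*} [AddCommGroup E] [Module ℝ E] [Fintype ι]
    [Nonempty ι] {s : Set E} (hs : Convex ℝ s) {c : ι → ℝ} {w : ι → E} (hc : ∀ i, 0 ≤ c i)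
    (hw : ∀ i, w i ∈ s) : ∑ i, c i • w i ∈ (∑ i, c i) • s := by
  rcases (sum_nonneg fun i _ => hc i).eq_or_lt with h | h
  · have hc0 : c = 0 := (Fintype.sum_eq_zero_iff_of_nonneg hc).1 h.symm
    simp only [hc0, Pi.zero_apply, zero_smul, sum_const_zero]
    exact ⟨_, hw (Classical.arbitrary ι), zero_smul ℝ _⟩
  · have hmass := hs.centerMass_mem (t := univ) (fun i _ => hc i) h fun i _ => hw i
    convert Set.smul_mem_smul_set (a := ∑ i, c i) hmass using 1
    rw [centerMass, smul_inv_smul₀ h.ne']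

structure IsLatticeComb {d : ℕ} {ι : Type*} [Fintype ι] (P : Set (Fin d → ℝ)) (t : ℝ)
    (x : Fin d → ℝ) (w : ι → Fin d → ℝ) (μ : ι → ℝ) : Prop where
  mem : ∀ i, w i ∈ latticePoints P
  nonneg : ∀ i, 0 ≤ μ i
  sum_eq : ∑ i, μ i = t
  eq_sum : x = ∑ i, μ i • w i

section Comb

variable {d k : ℕ} {ι : Type*} [Fintype ι] {P : Set (Fin d → ℝ)} {x : Fin d → ℝ}
  {w : ι → Fin d → ℝ} {μ : ι → ℝ}

theorem IsLatticeComb.mem_add_of_one_le [DecidableEq ι] (hP : Convex ℝ P)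
    (hc : IsLatticeComb P (k + 1) x w μ) (hx : IsLatticePt x) {j : ι} (hj : 1 ≤ μ j) :
    x ∈ latticePoints ((k : ℝ) • P) + latticePoints P := by
  have : Nonempty ι := ⟨j⟩
  set μ' := μ - Pi.single j 1
  have hμ' : ∀ i, 0 ≤ μ' i := by
    intro i
    rcases eq_or_ne i j with rfl | hij
    · simpa [μ'] using hj
    · simpa [μ', hij] using hc.nonneg i
  have hsum : ∑ i, μ' i = k := by
    simp [μ', sum_sub_distrib, hc.sum_eq]
  have hrepr : x - w j = ∑ i, μ' i • w i := by
    simp [μ', sub_smul, sum_sub_distrib, hc.eq_sum]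
  refine ⟨x - w j, ⟨?_, hx.sub_s9 (hc.mem j).2⟩, w j, hc.mem j, sub_add_cancel x (w j)⟩
  rw [hrepr, ← hsum]
  exact hP.sum_smul_mem_smul hμ' fun i => (hc.mem i).1

theorem IsLatticeComb.exists_one_le_of_card_le (hc : IsLatticeComb P (k + 1) x w μ)
    (hcard : Fintype.card ι ≤ k + 1) : ∃ j, 1 ≤ μ j := by
  have hne : (univ : Finset ι).Nonempty :=
    nonempty_of_sum_ne_zero (by rw [hc.sum_eq]; positivity)
  obtain ⟨j, -, hj⟩ := exists_le_of_sum_le hne (f := fun _ => (1 : ℝ)) (g := μ)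
    (by simpa [hc.sum_eq] using (Nat.cast_le (α := ℝ)).2 hcard)
  exact ⟨j, hj⟩

theorem IsLatticeComb.comp_equiv {κ : Type*} [Fintype κ] (hc : IsLatticeComb P (k + 1) x w μ)
    (e : κ ≃ ι) : IsLatticeComb P (k + 1) x (w ∘ e) (μ ∘ e) where
  mem i := hc.mem (e i)
  nonneg i := hc.nonneg (e i)
  sum_eq := by rw [← hc.sum_eq]; exact e.sum_comp μ
  eq_sum := by rw [hc.eq_sum]; exact (e.sum_comp fun i => μ i • w i).symm

end Comb

section HomMatrix

variable {d : ℕ}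

-- `det (homMatrix w)` is `d!` times the signed volume of the simplex with vertices `w i`.
def homMatrix (w : Fin (d + 1) → Fin d → ℝ) : Matrix (Fin (d + 1)) (Fin (d + 1)) ℝ :=
  Matrix.of fun i => Fin.snoc (w i) 1

theorem exists_int_det_homMatrix {w : Fin (d + 1) → Fin d → ℝ} (hw : ∀ i, IsLatticePt (w i)) :
    ∃ z : ℤ, (homMatrix w).det = z := by
  have hentry : ∀ i j, ∃ z : ℤ, homMatrix w i j = z := by
    intro i j
    induction j using Fin.lastCases with
    | last => exact ⟨1, by simp [homMatrix]⟩
    | cast l =>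
      obtain ⟨z, hz⟩ := hw i l
      exact ⟨z, by simpa [homMatrix] using hz⟩
  choose B hB using hentry
  refine ⟨(Matrix.of B).det, ?_⟩
  have hmap : homMatrix w = (Matrix.of B).map (Int.castRingHom ℝ) := by
    ext i j
    simp [hB]
  rw [hmap]
  exact ((Int.castRingHom ℝ).map_det (Matrix.of B)).symm

theorem homMatrix_update (w : Fin (d + 1) → Fin d → ℝ) (j : Fin (d + 1)) (y : Fin d → ℝ) :
    homMatrix (update w j y) = (homMatrix w).updateRow j (Fin.snoc y 1) := by
  ext i l
  rcases eq_or_ne i j with rfl | hij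
  · simp [homMatrix]
  · simp [homMatrix, hij]

theorem det_homMatrix_update_sum (w : Fin (d + 1) → Fin d → ℝ) {ν : Fin (d + 1) → ℝ}
    (hν : ∑ i, ν i = 1) (j : Fin (d + 1)) :
    (homMatrix (update w j (∑ i, ν i • w i))).det = ν j * (homMatrix w).det := by
  have hrow : (Fin.snoc (∑ i, ν i • w i) 1 : Fin (d + 1) → ℝ) = ∑ i, ν i • homMatrix w i := by
    funext l
    induction l using Fin.lastCases with
    | last => simpa [homMatrix, Finset.sum_apply] using hν.symm
    | cast l => simp [homMatrix, Finset.sum_apply]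
  rw [homMatrix_update, hrow, Matrix.det_updateRow_sum, smul_eq_mul]

theorem AffineIndependent.det_homMatrix_ne_zero {w : Fin (d + 1) → Fin d → ℝ}
    (hw : AffineIndependent ℝ w) : (homMatrix w).det ≠ 0 := by
  intro h
  obtain ⟨v, hv0, hv⟩ := Matrix.exists_vecMul_eq_zero_iff.mpr h
  have hsum : ∑ i, v i = 0 := by
    simpa [homMatrix, Matrix.vecMul, dotProduct] using congrFun hv (Fin.last d)
  have hcomb : ∑ i, v i • w i = 0 := by
    funext l
    simpa [homMatrix, Matrix.vecMul, dotProduct] using congrFun hv l.castSucc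
  refine hv0 (funext ((affineIndependent_iff_of_fintype ℝ w).1 hw v hsum ?_))
  rw [weightedVSub_eq_linear_combination _ hsum, hcomb]

end HomMatrix

theorem Fintype.sum_update_of_eq_zero {ι M : Type*} [Fintype ι] [DecidableEq ι] [AddCommMonoid M]
    {f : ι → M} {j : ι} (hj : f j = 0) (b : M) : ∑ i, update f j b i = b + ∑ i, f i := by
  rw [sum_update_of_mem (mem_univ j), sdiff_singleton_eq_erase, sum_erase _ hj]

section Descent

variable {d k : ℕ} {P : Set (Fin d → ℝ)} {x : Fin d → ℝ} {w : Fin (d + 1) → Fin d → ℝ}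
  {μ : Fin (d + 1) → ℝ}

theorem IsLatticeComb.exists_det_homMatrix_eq_mul (hP : Convex ℝ P)
    (hc : IsLatticeComb P (k + 1) x w μ) (hx : IsLatticePt x) (hd : d = k + 1) (hμ : ∀ i, μ i < 1) :
    ∃ w' μ' c, IsLatticeComb P (k + 1) x w' μ' ∧ 0 < c ∧ c < 1 ∧
      (homMatrix w').det = c * (homMatrix w).det := by
  set ν : Fin (d + 1) → ℝ := fun i => 1 - μ i
  have hν : ∀ i, 0 < ν i := fun i => sub_pos.2 (hμ i)
  have hνsum : ∑ i, ν i = 1 := by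
    simp only [ν, sum_sub_distrib, hc.sum_eq, sum_const, card_univ, Fintype.card_fin, hd]
    ring
  have hνlt : ∀ i, ν i < 1 := by
    intro i
    have hne : (univ.erase i).Nonempty := card_pos.1 (by simp [card_erase_of_mem, hd])
    rw [← hνsum, ← add_sum_erase _ _ (mem_univ i)]
    exact lt_add_of_pos_right _ (sum_pos (fun l _ => hν l) hne)
  set y := ∑ i, ν i • w i
  have hy : y ∈ latticePoints P := by
    refine ⟨hP.sum_mem (fun i _ => (hν i).le) hνsum fun i _ => (hc.mem i).1, ?_⟩
    have : y = ∑ i, w i - x := by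
      simp only [y, ν, sub_smul, one_smul, sum_sub_distrib, hc.eq_sum]
    rw [this]
    exact (isLatticePt_sum univ fun i _ => (hc.mem i).2).sub_s9 hx
  obtain ⟨j, hj⟩ := Finite.exists_min fun i => μ i / ν i
  set r := μ j / ν j
  have hrν : r * ν j = μ j := div_mul_cancel₀ _ (hν j).ne'
  have hr : 0 ≤ r := div_nonneg (hc.nonneg j) (hν j).le
  set μ₀ := μ - r • ν
  have hμ₀j : μ₀ j = 0 := by simp [μ₀, hrν]
  refine ⟨update w j y, update μ₀ j r, ν j, ⟨?_, ?_, ?_, ?_⟩, hν j, hνlt j, ?_⟩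
  · exact (forall_update_iff _ fun i v => v ∈ latticePoints P).2 ⟨hy, fun i _ => hc.mem i⟩
  · refine (forall_update_iff _ fun i v => 0 ≤ v).2 ⟨hr, fun i _ => ?_⟩
    have := (le_div_iff₀ (hν i)).1 (hj i)
    simp only [μ₀, Pi.sub_apply, Pi.smul_apply, smul_eq_mul]
    linarith
  · rw [Fintype.sum_update_of_eq_zero hμ₀j]
    simp [μ₀, sum_sub_distrib, hc.sum_eq, ← mul_sum, hνsum]
  · have hterm : ∀ i,
        update μ₀ j r i • update w j y i = update (fun i => μ₀ i • w i) j (r • y) i :=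
      apply_update₂ (fun _ a v => a • v) μ₀ w j r y
    rw [sum_congr rfl fun i _ => hterm i, Fintype.sum_update_of_eq_zero (by simp [hμ₀j])]
    simp [μ₀, sub_smul, sum_sub_distrib, ← hc.eq_sum, y, smul_sum, smul_smul]
  · exact det_homMatrix_update_sum w hνsum j

theorem IsLatticeComb.mem_add (hP : Convex ℝ P) (hdk : d ≤ k + 1) (hx : IsLatticePt x)
    (hc : IsLatticeComb P (k + 1) x w μ) (hdet : (homMatrix w).det ≠ 0) :
    x ∈ latticePoints ((k : ℝ) • P) + latticePoints P := by
  obtain ⟨z, hz⟩ := exists_int_det_homMatrix fun i => (hc.mem i).2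
  induction hn : z.natAbs using Nat.strong_induction_on generalizing w μ z with
  | _ n ih =>
    by_cases h1 : ∃ j, 1 ≤ μ j
    · obtain ⟨j, hj⟩ := h1
      exact hc.mem_add_of_one_le hP hx hj
    push Not at h1
    have hd : d = k + 1 := by
      refine le_antisymm hdk (not_lt.1 fun hlt => ?_)
      obtain ⟨j, hj⟩ := hc.exists_one_le_of_card_le (by simpa using hlt)
      exact (h1 j).not_ge hj
    obtain ⟨w', μ', c, hc', hc0, hc1, hdet'⟩ := hc.exists_det_homMatrix_eq_mul hP hx hd h1
    obtain ⟨z', hz'⟩ := exists_int_det_homMatrix fun i => (hc'.mem i).2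
    refine ih z'.natAbs ?_ hc' (by rw [hdet']; exact mul_ne_zero hc0.ne' hdet) z' hz' rfl
    have habs : |(z' : ℝ)| < |(z : ℝ)| := by
      rw [← hz', ← hz, hdet', abs_mul, abs_of_pos hc0]
      exact mul_lt_of_lt_one_left (abs_pos.2 hdet) hc1
    have habs' : |z'| < |z| := by exact_mod_cast habs
    rw [Int.abs_eq_natAbs, Int.abs_eq_natAbs] at habs'
    exact hn ▸ Int.ofNat_lt.1 habs'

end Descent

theorem latticePoints_smul_add_subset {d : ℕ} {P : Set (Fin d → ℝ)} (hP : Convex ℝ P) (k : ℕ) :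
    latticePoints ((k : ℝ) • P) + latticePoints P ⊆ latticePoints (((k : ℝ) + 1) • P) := by
  rintro _ ⟨a, ⟨ha, haL⟩, b, ⟨hb, hbL⟩, rfl⟩
  refine ⟨?_, haL.add_s9 hbL⟩
  rw [hP.add_smul (Nat.cast_nonneg k) zero_le_one, one_smul]
  exact Set.add_mem_add ha hb

theorem IsLatticePolytope.latticePoints_add_one_smul {d k : ℕ} {P : Set (Fin d → ℝ)}
    (hP : IsLatticePolytope P) (hdk : d ≤ k + 1) :
    latticePoints (((k : ℝ) + 1) • P) = latticePoints ((k : ℝ) • P) + latticePoints P := by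
  obtain ⟨V, -, hV, rfl⟩ := hP
  have hconv := convex_convexHull ℝ (V : Set (Fin d → ℝ))
  refine subset_antisymm ?_ (latticePoints_smul_add_subset hconv k)
  rintro _ ⟨⟨p, hp, rfl⟩, hx⟩
  obtain ⟨ι, _, z, c, hzV, hz, hc0, hc1, rfl⟩ := eq_pos_convex_span_of_mem_convexHull hp
  have hcomb : IsLatticeComb (convexHull ℝ V) (k + 1) (((k : ℝ) + 1) • ∑ i, c i • z i) z
      (((k : ℝ) + 1) • c) :=
    ⟨fun i => ⟨subset_convexHull ℝ _ (hzV ⟨i, rfl⟩), hV _ (hzV ⟨i, rfl⟩)⟩,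
      fun i => by simp only [Pi.smul_apply, smul_eq_mul]; have := hc0 i; positivity,
      by simp [← mul_sum, hc1], by simp [smul_sum, smul_smul]⟩
  have hcard : Fintype.card ι ≤ d + 1 := by
    simpa using hz.card_le_finrank_succ.trans (Nat.add_le_add_right (Submodule.finrank_le _) 1)
  rcases hcard.lt_or_eq with hlt | heq
  · obtain ⟨j, hj⟩ := hcomb.exists_one_le_of_card_le (by omega)
    classical
    exact hcomb.mem_add_of_one_le hconv hx hj
  · let e := Fintype.equivFinOfCardEq heq
    exact (hcomb.comp_equiv e.symm).mem_add hconv hdk hx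
      (hz.comp_embedding e.symm.toEmbedding).det_homMatrix_ne_zero

theorem stmt9_general (d : ℕ) (P : Set (Fin d → ℝ)) (hP : IsLatticePolytope P)
    (k : ℕ) (hk : d - 1 ≤ k) :
    {x : Fin d → ℝ | x ∈ ((k : ℝ) + 1) • P ∧ IsLatticePt x} =
      {x : Fin d → ℝ | ∃ a b : Fin d → ℝ,
        (a ∈ (k : ℝ) • P ∧ IsLatticePt a) ∧ (b ∈ P ∧ IsLatticePt b) ∧ x = a + b} := by
  have h := hP.latticePoints_add_one_smul (show d ≤ k + 1 by omega)
  ext x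
  simpa [latticePoints, Set.mem_add, and_assoc, eq_comm] using Set.ext_iff.1 h x

/-- Ewald–Wessels/Nakagawa: for a lattice `d`-polytope, `kP ∩ ℤᵈ + P ∩ ℤᵈ = (k+1)P ∩ ℤᵈ`
for all `k ≥ d - 1`. -/
theorem stmt9 (d : ℕ) (P : Set (Fin d → ℝ)) (hP : IsLatticePolytope P)
    (hdim : (interior P).Nonempty) (k : ℕ) (hk : d - 1 ≤ k) :
    {x : Fin d → ℝ | x ∈ ((k : ℝ) + 1) • P ∧ IsLatticePt x} =
      {x : Fin d → ℝ | ∃ a b : Fin d → ℝ,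
        (a ∈ (k : ℝ) • P ∧ IsLatticePt a) ∧ (b ∈ P ∧ IsLatticePt b) ∧ x = a + b} :=
  stmt9_general d P hP k hk
end
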